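/- (Transitivity) Let f : {0,1}^n → {0,1} be a Boolean function and let i, j, k ∈ [n] be pairwise distinct indices. If there are bits b_i, b_j ∈ {0,1} such that j ∈ U(f_{i b_i}) and k ∈ U(f_{j b_j}), then k ∈ U(f_{i b_i}). -/

import Mathlib

/-- `f` depends on variable `i`: flipping the `i`-th coordinate of some input changes the value. -/
def BoolDependsOn {ι : Type*} [DecidableEq ι] (f : (ι → Bool) → Bool) (i : ι) : Prop :=
  ∃ a : ι → Bool, f (Function.update a i (!a i)) ≠ f a

/-- The restriction `f|_{x_j = b}`, a Boolean function on the remaining variables. -/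
def restrictBit {ι : Type*} [DecidableEq ι] (f : (ι → Bool) → Bool) (j : ι) (b : Bool) :
    ({i : ι // i ≠ j} → Bool) → Bool :=
  fun y => f (fun i => if h : i = j then b else y ⟨i, h⟩)

/-- `k ∈ U(f_{jb})`: variable `k` (a variable of `f_{jb}`, i.e. `k ≠ j`) is useless for the
restriction `f_{jb}`. -/
def UselessIn {ι : Type*} [DecidableEq ι] (f : (ι → Bool) → Bool) (j : ι) (b : Bool)
    (k : ι) : Prop :=
  ∃ h : k ≠ j, ¬ BoolDependsOn (restrictBit f j b) ⟨k, h⟩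

/-!
Uselessness of `k` in `f_{i b}` means that `f` is unchanged by resetting `x_k` anywhere on the
subcube `x_i = b`. On the subcube `x_i = b_i` one can reset `x_k` by first setting `x_j := b_j`
(free, as `j` is useless there), then resetting `x_k` (free on `x_j = b_j`), and finally
restoring `x_j`.
-/

open Function

section
variable {ι : Type*} [DecidableEq ι]

theorem not_boolDependsOn_iff {f : (ι → Bool) → Bool} {i : ι} :
    ¬ BoolDependsOn f i ↔ ∀ a c, f (update a i c) = f a := by
  simp only [BoolDependsOn, not_exists, not_not]
  refine ⟨fun H a c => ?_, fun H a => H a _⟩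
  obtain rfl | rfl : c = a i ∨ c = !a i := by cases c <;> cases a i <;> simp
  · rw [update_eq_self]
  · exact H a

theorem restrictBit_comp_val (f : (ι → Bool) → Bool) {i : ι} {b : Bool} {a : ι → Bool}
    (ha : a i = b) : restrictBit f i b (a ∘ Subtype.val) = f a := by
  refine congrArg f (funext fun m => ?_)
  split_ifs with hm
  · exact hm ▸ ha.symm
  · rfl

theorem uselessIn_iff {f : (ι → Bool) → Bool} {i k : ι} {b : Bool} :
    UselessIn f i b k ↔ k ≠ i ∧ ∀ a, a i = b → ∀ c, f (update a k c) = f a := by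
  have restrict_update {a : ι → Bool} (ha : a i = b) (hki : k ≠ i) (c : Bool) :
      restrictBit f i b (update (a ∘ Subtype.val) ⟨k, hki⟩ c) = f (update a k c) := by
    rw [← update_comp_eq_of_injective _ Subtype.val_injective,
      restrictBit_comp_val f (by rwa [update_of_ne hki.symm])]
  simp only [UselessIn, not_boolDependsOn_iff]
  refine ⟨fun ⟨hki, H⟩ => ⟨hki, fun a ha c => ?_⟩, fun ⟨hki, H⟩ => ⟨hki, fun y c => ?_⟩⟩
  · rw [← restrict_update ha hki, H, restrictBit_comp_val f ha]
  · obtain ⟨a, ha, rfl⟩ : ∃ a : ι → Bool, a i = b ∧ a ∘ Subtype.val = y :=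
      ⟨fun m => if h : m = i then b else y ⟨m, h⟩, by simp, funext fun m => by simp [m.2]⟩
    rw [restrict_update ha hki, restrictBit_comp_val f ha, H a ha]

theorem UselessIn.trans {f : (ι → Bool) → Bool} {i j k : ι} {bi bj : Bool} (hki : k ≠ i)
    (h₁ : UselessIn f i bi j) (h₂ : UselessIn f j bj k) : UselessIn f i bi k := by
  obtain ⟨-, H₁⟩ := uselessIn_iff.mp h₁
  obtain ⟨hkj, H₂⟩ := uselessIn_iff.mp h₂
  refine uselessIn_iff.mpr ⟨hki, fun a ha c => ?_⟩
  calc f (update a k c)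
      = f (update (update a k c) j bj) := (H₁ _ (by rwa [update_of_ne hki.symm]) bj).symm
    _ = f (update (update a j bj) k c) := by rw [update_comm hkj]
    _ = f (update a j bj) := H₂ _ (update_self ..) c
    _ = f a := H₁ a ha bj

end

theorem useless_trans_general (n : ℕ) (f : (Fin n → Bool) → Bool) (i j k : Fin n)
    (hik : i ≠ k) (bi bj : Bool)
    (h1 : UselessIn f i bi j) (h2 : UselessIn f j bj k) :
    UselessIn f i bi k :=
  h1.trans hik.symm h2

/-- Transitivity: for pairwise distinct `i, j, k`, if `j ∈ U(f_{i b_i})` and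
`k ∈ U(f_{j b_j})`, then `k ∈ U(f_{i b_i})`. -/
theorem useless_trans (n : ℕ) (f : (Fin n → Bool) → Bool) (i j k : Fin n)
    (hij : i ≠ j) (hik : i ≠ k) (hjk : j ≠ k) (bi bj : Bool)
    (h1 : UselessIn f i bi j) (h2 : UselessIn f j bj k) :
    UselessIn f i bi k :=
  useless_trans_general n f i j k hik bi bj h1 h2
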